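/- Let λ ∈ ℂ \ {0} and β ∈ ℂ. For all m, n ∈ ℤ: (i) D_m^{λ,β} maps the ideal (t − n)·ℂ[t] into (t − n − m)·ℂ[t]; and (ii) D_m^{λ,β}(λ^n·1) − (n + (1−β)m)·λ^{n+m}·1 ∈ (t − n − m)·ℂ[t]. Consequently the weighted module 𝔚(Ω(λ,β)) = ⊕_{n∈ℤ} ℂ[t]/(t−n)ℂ[t], with basis w_n = λ^n·1 + (t−n)ℂ[t], carries the action d_m w_n = (n + (1−β)m)·w_{n+m}, i.e., 𝔚(Ω(λ,β)) ≅ A(0, 1−β). -/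
import Mathlib


open Polynomial

/-- The shift operator `f(t) ↦ f(t - m)` on `ℂ[t]`. -/
noncomputable def shiftOp (m : ℤ) : Module.End ℂ (Polynomial ℂ) :=
  (Polynomial.aeval (Polynomial.X - Polynomial.C (m : ℂ))).toLinearMap

/-- The operator `D_m^{λ,β} : f(t) ↦ λ^m (t - βm) f(t - m)` of `Ω(λ,β)`. -/
noncomputable def DOp (l b : ℂ) (m : ℤ) : Module.End ℂ (Polynomial ℂ) :=
  (l ^ m) • ((LinearMap.mulLeft ℂ (Polynomial.X - Polynomial.C (b * (m : ℂ)))) ∘ₗ shiftOp m)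

/-- The ideal `(t − n)·ℂ[t]` viewed as a ℂ-subspace of `ℂ[t]`. -/
noncomputable def Isub (n : ℤ) : Submodule ℂ (Polynomial ℂ) :=
  (Ideal.span {Polynomial.X - Polynomial.C ((n : ℤ) : ℂ)}).restrictScalars ℂ

lemma mem_Isub_iff (k : ℤ) (p : ℂ[X]) : p ∈ Isub k ↔ p.eval (k : ℂ) = 0 := by
  simp only [Isub, Submodule.restrictScalars_mem, Ideal.mem_span_singleton,
    Polynomial.dvd_iff_isRoot, Polynomial.IsRoot]

lemma eval_DOp (l b : ℂ) (m : ℤ) (f : ℂ[X]) (x : ℂ) :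
    (DOp l b m f).eval x = l ^ m * ((x - b * m) * f.eval (x - m)) := by
  simp [DOp, shiftOp, ← comp_eq_aeval, eval_comp]

/-- (i) `D_m^{λ,β}` maps `(t − n)ℂ[t]` into `(t − n − m)ℂ[t]`;
(ii) `D_m^{λ,β}(λ^n·1) − (n + (1−β)m)·λ^{n+m}·1 ∈ (t − n − m)ℂ[t]`; consequently with
`w_n = λ^n·1 + (t−n)ℂ[t]` the weighted module `𝔚(Ω(λ,β))` carries the action
`d_m w_n = (n + (1−β)m)·w_{n+m}`, i.e. `𝔚(Ω(λ,β)) ≅ A(0, 1−β)`. -/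
theorem weighting_of_omega (l : ℂ) (hl : l ≠ 0) (b : ℂ) (m n : ℤ) :
    (∀ f ∈ Isub n, DOp l b m f ∈ Isub (n + m)) ∧
    (DOp l b m (Polynomial.C (l ^ n))
        - Polynomial.C ((((n : ℂ) + (1 - b) * (m : ℂ)) * l ^ (n + m))) ∈ Isub (n + m)) ∧
    (Submodule.Quotient.mk (p := Isub (n + m)) (DOp l b m (Polynomial.C (l ^ n)))
        = ((n : ℂ) + (1 - b) * (m : ℂ)) •
            Submodule.Quotient.mk (p := Isub (n + m)) (Polynomial.C (l ^ (n + m)))) := by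
  have key : DOp l b m (Polynomial.C (l ^ n))
      - Polynomial.C ((((n : ℂ) + (1 - b) * (m : ℂ)) * l ^ (n + m))) ∈ Isub (n + m) := by
    rw [mem_Isub_iff, eval_sub, eval_DOp, eval_C, eval_C]
    rw [zpow_add₀ hl]
    push_cast
    ring
  refine ⟨?_, key, ?_⟩
  · intro f hf
    rw [mem_Isub_iff] at hf ⊢
    rw [eval_DOp]
    push_cast
    rw [show ((n : ℂ) + m) - m = (n : ℂ) by ring, hf]
    ring
  · rw [← Submodule.Quotient.mk_smul, Submodule.Quotient.eq]
    simpa [Polynomial.smul_C, smul_eq_mul] using key
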